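/- Any tri-colored sum-free set in F_2^n has size at most 6 · C(n, ⌊n/3⌋). -/

import Mathlib

/-!
Over `𝔽₂` the tensor `T i j k = [a i + b j + c k = 0]` equals `∏ₜ (1 + a i t + b j t + c k t)`,
and by the sum-free hypothesis it is the diagonal tensor on `Fin m`. Expanding the product,
every monomial assigns disjoint sets of coordinates to the `a`-, `b`- and `c`-factors, so one of
these sets has at most `n / 3` elements; grouping the monomials by that set writes `T` as a sum of
`3 · #{S | #S ≤ n / 3} ≤ 6 · C(n, ⌊n/3⌋)` slices. A diagonal tensor with nonzero diagonal is not a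
sum of fewer than `m` slices (Tao's slice rank bound).
-/

open Finset Module

section SliceRank

variable {F ι : Type*} [Field F] [Fintype ι]

theorem Submodule.exists_finrank_le_card_support [DecidableEq F] (V : Submodule F (ι → F)) :
    ∃ v ∈ V, finrank F V ≤ #{i | v i ≠ 0} := by
  classical
  -- A smallest set `I` of coordinates on which no nonzero vector of `V` vanishes: by minimality
  -- some `w i ∈ V` vanishes on `I \ {i}` but not at `i`, so `∑ i ∈ I, w i` is nonzero on `I`.
  obtain ⟨I, hI, hmin⟩ := exists_min_image
    ({I | ∀ v ∈ V, (∀ i ∈ I, v i = 0) → v = 0} : Finset (Finset ι)) card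
    ⟨univ, mem_filter.2 ⟨mem_univ _, fun v _ hv => funext fun i => hv i (mem_univ i)⟩⟩
  rw [mem_filter] at hI
  have hw : ∀ i ∈ I, ∃ w ∈ V, (∀ j ∈ I.erase i, w j = 0) ∧ w i ≠ 0 := by
    intro i hi
    have hnot : ¬ ∀ v ∈ V, (∀ j ∈ I.erase i, v j = 0) → v = 0 := fun h =>
      (hmin _ (mem_filter.2 ⟨mem_univ _, h⟩)).not_gt (card_erase_lt_of_mem hi)
    push Not at hnot
    obtain ⟨w, hwV, hw0, hwne⟩ := hnot
    refine ⟨w, hwV, hw0, fun hwi => hwne (hI.2 w hwV fun j hj => ?_)⟩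
    obtain rfl | hji := eq_or_ne j i
    · exact hwi
    · exact hw0 j (mem_erase.2 ⟨hji, hj⟩)
  choose! w hwV hw0 hwi using hw
  have hsupp : I ⊆ ({j | (∑ i ∈ I, w i) j ≠ 0} : Finset ι) := by
    intro j hj
    rw [mem_filter, Finset.sum_apply, sum_eq_single_of_mem j hj
      fun i hi hij => hw0 i hi j (mem_erase.2 ⟨hij.symm, hj⟩)]
    exact ⟨mem_univ _, hwi j hj⟩
  let restrict : V →ₗ[F] (I → F) :=
    (LinearMap.pi fun i : I => LinearMap.proj (i : ι)) ∘ₗ V.subtype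
  have hinj : Function.Injective restrict := by
    rw [← LinearMap.ker_eq_bot, LinearMap.ker_eq_bot']
    intro v hv
    exact Subtype.ext (hI.2 v v.2 fun i hi => congrFun hv ⟨i, hi⟩)
  refine ⟨∑ i ∈ I, w i, sum_mem hwV, ?_⟩
  calc finrank F V ≤ finrank F (I → F) := LinearMap.finrank_le_finrank_of_injective hinj
    _ = #I := by simp
    _ ≤ _ := card_le_card hsupp

theorem Matrix.rank_mul_add_mul_le {m n₁ n₂ : Type*} [Fintype m] [Fintype n₁] [Fintype n₂]
    (A₁ : Matrix m n₁ F) (B₁ : Matrix n₁ m F) (A₂ : Matrix m n₂ F) (B₂ : Matrix n₂ m F) :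
    (A₁ * B₁ + A₂ * B₂).rank ≤ Fintype.card n₁ + Fintype.card n₂ := by
  rw [← fromCols_mul_fromRows, ← Fintype.card_sum]
  exact (rank_mul_le_left _ _).trans (rank_le_card_width _)

theorem card_le_of_sum_slices_eq_diagonal [DecidableEq ι] {α β γ : Type*}
    (A : Finset α) (B : Finset β) (C : Finset γ)
    (f : α → ι → F) (g : α → ι → ι → F) (f' : β → ι → F) (g' : β → ι → ι → F)
    (f'' : γ → ι → F) (g'' : γ → ι → ι → F)
    (hT : ∀ i j k, ∑ a ∈ A, f a i * g a j k + ∑ b ∈ B, f' b j * g' b i k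
      + ∑ c ∈ C, f'' c k * g'' c i j = if i = j ∧ j = k then 1 else 0) :
    Fintype.card ι ≤ #A + #B + #C := by
  classical
  let N : Matrix C ι F := Matrix.of fun c k => f'' c k
  -- Contracting the third index against `h ⊥ f'' c` kills the `C`-slices and leaves
  -- `diagonal h` as a matrix of rank at most `#A + #B`.
  obtain ⟨h, hker, hsupp⟩ := (LinearMap.ker N.mulVecLin).exists_finrank_le_card_support
  have hh : ∀ c ∈ C, ∑ k, f'' c k * h k = 0 := fun c hc => by
    simpa [N, Matrix.mulVec, dotProduct] using congrFun (LinearMap.mem_ker.1 hker) ⟨c, hc⟩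
  have hker_dim : Fintype.card ι ≤ finrank F (LinearMap.ker N.mulVecLin) + #C := by
    have := LinearMap.finrank_range_add_finrank_ker N.mulVecLin
    have := (LinearMap.range N.mulVecLin).finrank_le
    simp only [finrank_fintype_fun_eq_card, Fintype.card_coe] at *
    omega
  have hdiag : Matrix.diagonal h
      = Matrix.of (fun i (a : A) => f a i) * Matrix.of (fun (a : A) j => ∑ k, g a j k * h k)
        + Matrix.of (fun i (b : B) => ∑ k, g' b i k * h k)
          * Matrix.of (fun (b : B) j => f' b j) := by
    ext i j
    calc Matrix.diagonal h i j = ∑ k, (if i = j ∧ j = k then 1 else 0) * h k := by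
          by_cases hij : i = j <;> simp [hij]
      _ = ∑ a ∈ A, f a i * ∑ k, g a j k * h k + ∑ b ∈ B, (∑ k, g' b i k * h k) * f' b j
            + ∑ c ∈ C, g'' c i j * ∑ k, f'' c k * h k := by
          simp only [← hT, add_mul, sum_add_distrib, sum_mul, mul_sum]
          rw [sum_comm (s := univ) (t := A), sum_comm (s := univ) (t := B),
            sum_comm (s := univ) (t := C)]
          simp only [mul_comm, mul_left_comm]
      _ = _ := by
          rw [sum_eq_zero (s := C) fun c hc => by rw [hh c hc, mul_zero], add_zero]
          rw [← sum_coe_sort A, ← sum_coe_sort B]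
          rfl
  have hrank : (Matrix.diagonal h).rank ≤ #A + #B := by
    rw [hdiag]
    exact (Matrix.rank_mul_add_mul_le _ _ _ _).trans_eq (by simp)
  rw [Matrix.rank_diagonal, Fintype.card_subtype] at hrank
  omega

end SliceRank

section ColorExpansion

variable {ι R : Type*} [Fintype ι]

def colorClass (φ : ι → Fin 4) (c : Fin 4) : Finset ι := {t | φ t = c}

theorem card_colorClass_add_le (φ : ι → Fin 4) :
    #(colorClass φ 1) + #(colorClass φ 2) + #(colorClass φ 3) ≤ Fintype.card ι := by
  have h := card_eq_sum_card_fiberwise (f := φ) (s := univ) (t := univ)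
    fun t _ => mem_univ (φ t)
  rw [Fin.sum_univ_four, card_univ] at h
  simp only [colorClass]
  omega

theorem prod_one_add_add_add [DecidableEq ι] [CommSemiring R] (x y z : ι → R) :
    ∏ t, (1 + x t + y t + z t) = ∑ φ : ι → Fin 4,
      (∏ t ∈ colorClass φ 1, x t) * (∏ t ∈ colorClass φ 2, y t) * ∏ t ∈ colorClass φ 3, z t := by
  have hsum : ∀ t, 1 + x t + y t + z t = ∑ c : Fin 4, ![1, x t, y t, z t] c := fun t => by
    simp [Fin.sum_univ_four, add_assoc]
  simp_rw [hsum, Fintype.prod_sum]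
  refine sum_congr rfl fun φ _ => ?_
  rw [← prod_fiberwise univ φ, Fin.prod_univ_four]
  have hfiber : ∀ c, ∏ t ∈ univ with φ t = c, ![1, x t, y t, z t] (φ t)
      = ∏ t ∈ colorClass φ c, ![1, x t, y t, z t] c :=
    fun c => prod_congr rfl fun t ht => by rw [(mem_filter.1 ht).2]
  simp [hfiber, mul_assoc]

theorem sum_eq_sum_mul_sum_fiberwise [CommSemiring R] {Φ K : Type*} [DecidableEq K]
    {s : Finset Φ} {t : Finset K} {κ : Φ → K} (hκ : ∀ φ ∈ s, κ φ ∈ t)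
    {W : Φ → R} (X : K → R) (Y : Φ → R) (hW : ∀ φ ∈ s, W φ = X (κ φ) * Y φ) :
    ∑ φ ∈ s, W φ = ∑ S ∈ t, X S * ∑ φ ∈ s with κ φ = S, Y φ := by
  rw [← sum_fiberwise_of_maps_to hκ]
  refine sum_congr rfl fun S _ => ?_
  rw [mul_sum]
  refine sum_congr rfl fun φ hφ => ?_
  obtain ⟨hφs, rfl⟩ := mem_filter.1 hφ
  exact hW φ hφs

theorem exists_slices_prod_one_add_add_add [DecidableEq ι] [CommSemiring R] :
    ∃ G₁ G₂ G₃ : Finset ι → (ι → R) → (ι → R) → R, ∀ x y z : ι → R,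
      ∏ t, (1 + x t + y t + z t)
        = ∑ S with #S ≤ Fintype.card ι / 3, (∏ t ∈ S, x t) * G₁ S y z
          + ∑ S with #S ≤ Fintype.card ι / 3, (∏ t ∈ S, y t) * G₂ S x z
          + ∑ S with #S ≤ Fintype.card ι / 3, (∏ t ∈ S, z t) * G₃ S x y := by
  set r := Fintype.card ι / 3
  -- Sort the colourings by the first of the classes `1, 2, 3` with at most `r` elements;
  -- as the classes are disjoint, one of them always qualifies.
  let Φ₁ : Finset (ι → Fin 4) := {φ | #(colorClass φ 1) ≤ r}
  let Φ₂ : Finset (ι → Fin 4) := {φ | ¬ #(colorClass φ 1) ≤ r ∧ #(colorClass φ 2) ≤ r}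
  let Φ₃ : Finset (ι → Fin 4) := {φ | ¬ #(colorClass φ 1) ≤ r ∧ ¬ #(colorClass φ 2) ≤ r}
  refine ⟨fun S y z => ∑ φ ∈ Φ₁ with colorClass φ 1 = S,
      (∏ t ∈ colorClass φ 2, y t) * ∏ t ∈ colorClass φ 3, z t,
    fun S x z => ∑ φ ∈ Φ₂ with colorClass φ 2 = S,
      (∏ t ∈ colorClass φ 1, x t) * ∏ t ∈ colorClass φ 3, z t,
    fun S x y => ∑ φ ∈ Φ₃ with colorClass φ 3 = S,
      (∏ t ∈ colorClass φ 1, x t) * ∏ t ∈ colorClass φ 2, y t, fun x y z => ?_⟩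
  rw [prod_one_add_add_add,
    ← sum_filter_add_sum_filter_not univ (fun φ => #(colorClass φ 1) ≤ r),
    ← sum_filter_add_sum_filter_not (univ.filter fun φ => ¬ #(colorClass φ 1) ≤ r)
      (fun φ => #(colorClass φ 2) ≤ r),
    filter_filter, filter_filter, ← add_assoc]
  congr 1; congr 1
  · refine sum_eq_sum_mul_sum_fiberwise (fun φ hφ => ?_) _ _ fun φ _ => mul_assoc _ _ _
    simpa using (mem_filter.1 hφ).2
  · refine sum_eq_sum_mul_sum_fiberwise (fun φ hφ => ?_) _ _ fun φ _ => by ring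
    simpa using (mem_filter.1 hφ).2.2
  · refine sum_eq_sum_mul_sum_fiberwise (fun φ hφ => ?_) _ _ fun φ _ => by ring
    have := card_colorClass_add_le φ
    have := (mem_filter.1 hφ).2
    simp only [mem_filter, mem_univ, true_and]
    omega

end ColorExpansion

theorem ZMod.prod_one_add_eq_ite {ι : Type*} [Fintype ι] (s : ι → ZMod 2) :
    ∏ t, (1 + s t) = if s = 0 then 1 else 0 := by
  split_ifs with hs
  · simp [hs]
  · obtain ⟨t, ht⟩ := Function.ne_iff.mp hs
    exact prod_eq_zero (mem_univ t) ((by decide : ∀ u : ZMod 2, u ≠ 0 → 1 + u = 0) _ ht)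

theorem card_filter_card_le_eq_sum_choose {ι : Type*} [Fintype ι] (k : ℕ) :
    #({S | #S ≤ k} : Finset (Finset ι)) = ∑ d ∈ range (k + 1), (Fintype.card ι).choose d := by
  rw [card_eq_sum_card_fiberwise (f := card) (t := range (k + 1))
    fun S hS => mem_range.2 (Nat.lt_succ_of_le (mem_filter.1 hS).2)]
  refine sum_congr rfl fun d hd => ?_
  rw [filter_filter, filter_congr fun S _ => and_iff_right_of_imp fun h : #S = d =>
      h ▸ Nat.le_of_lt_succ (mem_range.1 hd),
    univ_filter_card_eq, card_powersetCard, card_univ]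

theorem sum_range_choose_le_two_mul_choose {n k : ℕ} (hk : 3 * k ≤ n + 1) :
    ∑ d ∈ range (k + 1), n.choose d ≤ 2 * n.choose k := by
  induction k with
  | zero => simp
  | succ k ih =>
    have hdouble : 2 * n.choose k ≤ n.choose (k + 1) := by
      refine Nat.le_of_mul_le_mul_right ?_ k.succ_pos
      rw [Nat.choose_succ_right_eq, mul_comm 2, mul_assoc]
      exact Nat.mul_le_mul_left _ (by omega)
    rw [sum_range_succ]
    have := ih (by omega)
    omega

theorem card_filter_card_le_le_two_mul_choose {ι : Type*} [Fintype ι] :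
    #({S | #S ≤ Fintype.card ι / 3} : Finset (Finset ι))
      ≤ 2 * (Fintype.card ι).choose (Fintype.card ι / 3) := by
  rw [card_filter_card_le_eq_sum_choose]
  exact sum_range_choose_le_two_mul_choose (by omega)

/-- Any tri-colored sum-free set in `𝔽₂ⁿ` has size at most `6 * C(n, ⌊n/3⌋)`. -/
theorem stmt3 {n m : ℕ} (a b c : Fin m → (Fin n → ZMod 2))
    (htri : ∀ i j k, a i + b j + c k = 0 ↔ (i = j ∧ j = k)) :
    m ≤ 6 * n.choose (n / 3) := by
  obtain ⟨G₁, G₂, G₃, hG⟩ := exists_slices_prod_one_add_add_add (ι := Fin n) (R := ZMod 2)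
  set 𝒮 : Finset (Finset (Fin n)) := {S | #S ≤ Fintype.card (Fin n) / 3}
  have hm := card_le_of_sum_slices_eq_diagonal 𝒮 𝒮 𝒮
    (fun S i => ∏ t ∈ S, a i t) (fun S j k => G₁ S (b j) (c k))
    (fun S j => ∏ t ∈ S, b j t) (fun S i k => G₂ S (a i) (c k))
    (fun S k => ∏ t ∈ S, c k t) (fun S i j => G₃ S (a i) (b j)) fun i j k => by
      rw [← hG, ← if_congr (htri i j k) rfl rfl, ← ZMod.prod_one_add_eq_ite]
      simp only [Pi.add_apply, add_assoc]
  have h𝒮 : #𝒮 ≤ 2 * (Fintype.card (Fin n)).choose (Fintype.card (Fin n) / 3) :=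
    card_filter_card_le_le_two_mul_choose
  simp only [Fintype.card_fin] at hm h𝒮
  omega
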